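/- For every odd integer b ≥ 1 and every integer m with 0 ≤ m ≤ b, the number of ±1-step walks of length b starting at 0 whose maximum attained position equals m is given by f(m,b) = C(b, (b−1)/2 + (−1)^{m−1} · ⌈m/2⌉), where C(n,k) denotes the binomial coefficient. -/

import Mathlib

/-- The value of a ±1 step: `true` is a rightward step (+1), `false` a leftward step (−1). -/
def stepVal (x : Bool) : ℤ := if x then 1 else -1

/-- The position after `k` steps (partial sum `S_k`) of the walk with steps `ε`. -/
def partialSum {b : ℕ} (ε : Fin b → Bool) (k : ℕ) : ℤ :=
  ∑ i : Fin b, if (i : ℕ) < k then stepVal (ε i) else 0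

/-- The maximum attained position `max { S_k : 0 ≤ k ≤ b }` of the walk with steps `ε`,
started at 0. -/
def walkMax {b : ℕ} (ε : Fin b → Bool) : ℤ :=
  (Finset.range (b + 1)).sup' Finset.nonempty_range_add_one (partialSum ε)

/-- `f m b` : the number of ±1-step walks of length `b` starting at 0 whose maximum
attained position equals `m`. -/
def f (m : ℤ) (b : ℕ) : ℕ :=
  (Finset.univ.filter (fun ε : Fin b → Bool => walkMax ε = m)).card

/-!
Splitting off the first step, the maximum of the walk `ε₁ε'` is `max 0 (ε₁ + walkMax ε')`.
Hence `f (m, b + 1) = f (m - 1, b) + f (m + 1, b)` for `m ≥ 1` and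
`f (0, b + 1) = f (0, b) + f (1, b)`. Pascal's rule (together with the central symmetry
`C(b, ⌊b/2⌋) = C(b, ⌈b/2⌉)` at `m = 0`) shows that `C(b, ⌊(b + m + 1)/2⌋)` satisfies the
same recursion and initial values, so it equals `f (m, b)` for all `b` and `m ≥ 0`. For odd `b`
this index is the stated one when `m` is odd, and its complement in `b` when `m` is even.
-/

lemma Int.ceil_natCast_div_two {K : Type*} [Field K] [LinearOrder K] [IsStrictOrderedRing K]
    [FloorRing K] (n : ℕ) : ⌈(n : K) / 2⌉ = ((n + 1) / 2 : ℕ) := by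
  rw [Int.ceil_eq_iff]
  rcases Nat.even_or_odd' n with ⟨c, rfl | rfl⟩
  · rw [show (2 * c + 1) / 2 = c by omega]
    push_cast
    constructor <;> linarith
  · rw [show (2 * c + 1 + 1) / 2 = c + 1 by omega]
    push_cast
    constructor <;> linarith

lemma card_filter_fin_succ {b : ℕ} (P : (Fin (b + 1) → Bool) → Prop) [DecidablePred P] :
    (Finset.univ.filter P).card =
      (Finset.univ.filter fun ε : Fin b → Bool => P (Fin.cons true ε)).card +
        (Finset.univ.filter fun ε : Fin b → Bool => P (Fin.cons false ε)).card := by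
  simp only [Finset.card_filter]
  rw [← (Fin.consEquiv fun _ => Bool).sum_comp, Fintype.sum_prod_type, Fintype.sum_bool]
  rfl

lemma partialSum_zero {b : ℕ} (ε : Fin b → Bool) : partialSum ε 0 = 0 := by
  simp [partialSum]

lemma partialSum_cons {b : ℕ} (x : Bool) (ε : Fin b → Bool) (k : ℕ) :
    partialSum (Fin.cons x ε) (k + 1) = stepVal x + partialSum ε k := by
  rw [partialSum, partialSum, Fin.sum_univ_succ]
  simp

lemma partialSum_le_walkMax {b : ℕ} (ε : Fin b → Bool) {k : ℕ} (hk : k ≤ b) :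
    partialSum ε k ≤ walkMax ε :=
  Finset.le_sup' _ (Finset.mem_range.mpr (Nat.lt_succ_of_le hk))

lemma walkMax_nonneg {b : ℕ} (ε : Fin b → Bool) : 0 ≤ walkMax ε :=
  partialSum_zero ε ▸ partialSum_le_walkMax ε (Nat.zero_le b)

lemma walkMax_fin_zero (ε : Fin 0 → Bool) : walkMax ε = 0 := by
  simp [walkMax, partialSum]

lemma walkMax_cons {b : ℕ} (x : Bool) (ε : Fin b → Bool) :
    walkMax (Fin.cons x ε) = max 0 (stepVal x + walkMax ε) := by
  apply le_antisymm
  · refine Finset.sup'_le _ _ fun k hk => ?_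
    rcases k with _ | k
    · rw [partialSum_zero]
      exact le_max_left _ _
    · rw [partialSum_cons]
      have := partialSum_le_walkMax ε (k := k) (by simp at hk; omega)
      exact le_max_of_le_right (by omega)
  · refine max_le (walkMax_nonneg _) ?_
    obtain ⟨j, hj, hmax⟩ := Finset.exists_mem_eq_sup' (Finset.nonempty_range_add_one (n := b))
      (partialSum ε)
    have := partialSum_le_walkMax (Fin.cons x ε) (k := j + 1) (by simp at hj; omega)
    rwa [partialSum_cons, ← hmax] at this

lemma f_succ (m : ℤ) (b : ℕ) :
    f m (b + 1) =
      (Finset.univ.filter fun ε : Fin b → Bool => walkMax ε + 1 = m).card +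
        (Finset.univ.filter fun ε : Fin b → Bool => max 0 (walkMax ε - 1) = m).card := by
  rw [f, card_filter_fin_succ]
  congr 2 <;> ext ε
  · have := walkMax_nonneg ε
    simp only [walkMax_cons, stepVal, if_true, Finset.mem_filter, Finset.mem_univ, true_and]
    omega
  · simp only [walkMax_cons, stepVal, Bool.false_eq_true, if_false, neg_add_eq_sub]

lemma f_succ_of_pos {m : ℤ} (hm : 0 < m) (b : ℕ) : f m (b + 1) = f (m - 1) b + f (m + 1) b := by
  rw [f_succ, f, f]
  congr 2 <;> ext ε <;> have := walkMax_nonneg ε <;>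
    simp only [Finset.mem_filter, Finset.mem_univ, true_and] <;> omega

lemma f_zero_succ (b : ℕ) : f 0 (b + 1) = f 0 b + f 1 b := by
  have hne (ε : Fin b → Bool) : walkMax ε + 1 ≠ 0 := by have := walkMax_nonneg ε; omega
  have hdisj : Disjoint (Finset.univ.filter fun ε : Fin b → Bool => walkMax ε = 0)
      (Finset.univ.filter fun ε => walkMax ε = 1) :=
    Finset.disjoint_filter.mpr fun _ _ h0 h1 => by omega
  rw [f_succ, f, f, ← Finset.card_union_of_disjoint hdisj, ← Finset.filter_or]
  simp only [hne, Finset.filter_false, Finset.card_empty, zero_add]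
  congr 1
  ext ε
  have := walkMax_nonneg ε
  simp only [Finset.mem_filter, Finset.mem_univ, true_and]
  omega

theorem f_natCast_eq_choose (n b : ℕ) : f n b = b.choose ((b + n + 1) / 2) := by
  induction b generalizing n with
  | zero =>
    rcases n with _ | n
    · simp [f, walkMax_fin_zero]
    · have : (0 : ℤ) ≠ (n + 1 : ℕ) := by omega
      simp only [f, walkMax_fin_zero, this, Finset.filter_false, Finset.card_empty]
      rw [Nat.choose_eq_zero_of_lt (by omega)]
  | succ b ih =>
    rcases n with _ | n
    · have h0 : f 0 b = b.choose ((b + 1) / 2) := by simpa using ih 0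
      have h1 : f 1 b = b.choose (b / 2 + 1) := by
        rw [← Nat.cast_one, ih 1, show (b + 1 + 1) / 2 = b / 2 + 1 by omega]
      rw [Nat.cast_zero, f_zero_succ, h0, h1, show (b + 1 + 0 + 1) / 2 = b / 2 + 1 by omega,
        Nat.choose_succ_succ, ← Nat.choose_symm (Nat.div_le_self b 2),
        show b - b / 2 = (b + 1) / 2 by omega]
    · rw [f_succ_of_pos (by positivity), show ((n + 1 : ℕ) : ℤ) - 1 = n by push_cast; ring,
        show ((n + 1 : ℕ) : ℤ) + 1 = (n + 2 : ℕ) by push_cast; ring, ih, ih,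
        show (b + (n + 2) + 1) / 2 = (b + n + 1) / 2 + 1 by omega,
        show (b + 1 + (n + 1) + 1) / 2 = (b + n + 1) / 2 + 1 by omega, Nat.choose_succ_succ]

theorem f_closed_form_odd_general (b : ℕ) (hbo : Odd b)
    (m : ℤ) (hm0 : 0 ≤ m) (hmb : m ≤ (b : ℤ)) :
    (f m b : ℤ) =
      Nat.choose b ((((b : ℤ) - 1) / 2 + ((m - 1).negOnePow : ℤ) * ⌈(m : ℚ) / 2⌉).toNat) := by
  obtain ⟨a, rfl⟩ := hbo
  lift m to ℕ using hm0
  rw [f_natCast_eq_choose, Int.cast_natCast, Int.ceil_natCast_div_two,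
    show ((2 * a + 1 : ℕ) - 1 : ℤ) / 2 = a by omega]
  rcases Nat.even_or_odd' m with ⟨c, rfl | rfl⟩
  · rw [Int.negOnePow_odd _ ⟨c - 1, by push_cast; ring⟩, Units.val_neg, Units.val_one,
      ← Nat.choose_symm (by omega)]
    congr 2
    omega
  · rw [Int.negOnePow_even _ ⟨c, by push_cast; ring⟩, Units.val_one]
    congr 2
    omega

/-- Proposition 2 (odd case): for odd `b ≥ 1` and `0 ≤ m ≤ b`,
`f(m, b) = C(b, (b−1)/2 + (−1)^(m−1) ⌈m/2⌉)`. -/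
theorem f_closed_form_odd (b : ℕ) (hb : 1 ≤ b) (hbo : Odd b)
    (m : ℤ) (hm0 : 0 ≤ m) (hmb : m ≤ (b : ℤ)) :
    (f m b : ℤ) =
      Nat.choose b ((((b : ℤ) - 1) / 2 + ((m - 1).negOnePow : ℤ) * ⌈(m : ℚ) / 2⌉).toNat) :=
  f_closed_form_odd_general b hbo m hm0 hmb
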